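/- arXiv:2305.17399 — 6 statements merged into one kernel-verified Lean document; each statement's English description precedes it below -/
import Mathlib

section
/- In a multiplicative Lie algebra (G,·,⋆), conjugation by (x⋆y) equals conjugation by the commutator [x,y], i.e. ^{(x⋆y)}(u⋆v) = ^{[x,y]}(u⋆v) for all x,y,u,v ∈ G. -/
/-! Expanding `(x u) ⋆ (y v)` first on the left and then on the right, and in the other order,
and cancelling the common outer factors gives `ˣʸw · (x ⋆ y) = (x ⋆ y) · ʸˣw` for `w = u ⋆ v`.
Since `⋆`-values are stable under conjugation, `w` may be replaced by its conjugate under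
`(y x)⁻¹`, and then the identity says that `[x, y] = x y (y x)⁻¹` and `x ⋆ y` conjugate `w` alike. -/

/-- A multiplicative Lie algebra (Ellis): a group `G` with a second binary
operation `⋆` satisfying the five identities. `ˣy` denotes `x*y*x⁻¹`. -/
class MulLie (G : Type*) [Group G] where
  star : G → G → G
  star_self : ∀ x : G, star x x = 1
  star_mul_right : ∀ x y z : G, star x (y * z) = star x y * (y * star x z * y⁻¹)
  star_mul_left : ∀ x y z : G, star (x * y) z = (x * star y z * x⁻¹) * star x z
  jacobi : ∀ x y z : G,
    star (star x y) (y * z * y⁻¹) * star (star y z) (z * x * z⁻¹) *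
      star (star z x) (x * y * x⁻¹) = 1
  conj_star : ∀ x y z : G, z * star x y * z⁻¹ = star (z * x * z⁻¹) (z * y * z⁻¹)

open MulLie
open scoped commutatorElement

namespace MulLie

variable {G : Type*} [Group G] [MulLie G]

lemma star_conj_inv (g u v : G) : star (g⁻¹ * u * g) (g⁻¹ * v * g) = g⁻¹ * star u v * g := by
  simpa only [inv_inv] using (conj_star u v g⁻¹).symm

lemma conj_mul_star_mul_star (x y u v : G) :
    (x * y) * star u v * (x * y)⁻¹ * star x y = star x y * ((y * x) * star u v * (y * x)⁻¹) := by
  have expand_left_first : star (x * u) (y * v) =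
      x * star u y * x⁻¹ * ((x * y) * star u v * (x * y)⁻¹ * star x y) *
        (y * star x v * y⁻¹) := by
    rw [star_mul_left, star_mul_right, star_mul_right]; group
  have expand_right_first : star (x * u) (y * v) =
      x * star u y * x⁻¹ * (star x y * ((y * x) * star u v * (y * x)⁻¹)) *
        (y * star x v * y⁻¹) := by
    rw [star_mul_right, star_mul_left, star_mul_left]; group
  exact mul_left_cancel (mul_right_cancel (expand_left_first.symm.trans expand_right_first))

end MulLie

/-- Conjugation by `x ⋆ y` agrees with conjugation by the commutator `[x, y]`
on all elements of the form `u ⋆ v`. -/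
theorem conj_by_star_eq_conj_by_commutator {G : Type*} [Group G] [MulLie G]
    (x y u v : G) :
    star x y * star u v * (star x y)⁻¹ = ⁅x, y⁆ * star u v * ⁅x, y⁆⁻¹ := by
  have key := conj_mul_star_mul_star x y ((y * x)⁻¹ * u * (y * x)) ((y * x)⁻¹ * v * (y * x))
  rw [star_conj_inv] at key
  have unconj : y * x * ((y * x)⁻¹ * star u v * (y * x)) * (y * x)⁻¹ = star u v := by group
  rw [unconj] at key
  calc star x y * star u v * (star x y)⁻¹
      = (x * y) * ((y * x)⁻¹ * star u v * (y * x)) * (x * y)⁻¹ * star x y * (star x y)⁻¹ := by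
        rw [key]
    _ = ⁅x, y⁆ * star u v * ⁅x, y⁆⁻¹ := by rw [commutatorElement_def]; group
end

section
/- In a multiplicative Lie algebra (G,·,⋆), [(x⋆y),z] = ([x,y]⋆z) for all x,y,z ∈ G, where [a,b] = aba⁻¹b⁻¹. -/
open MulLie
open scoped commutatorElement

/-! Write `⁅x, y⁆ = ˣy * y⁻¹` and expand `⁅x, y⁆ ⋆ z` by the left Leibniz rule. The factor
`ˣy ⋆ z` is computed by pulling the conjugation by `x` out with `conj_star`. The factor coming
from `y⁻¹ ⋆ z` is the conjugate of `(y ⋆ z)⁻¹` by `⁅x, y⁆`, and by a Peiffer-type identity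
`x ⋆ y` and `⁅x, y⁆` act alike by conjugation on all values of `⋆`; so it is the conjugate by
`x ⋆ y`, and the product collapses to `⁅x ⋆ y, z⁆`. The Peiffer identity comes from expanding
`(a * b) ⋆ (c * d)` once left factor first and once right factor first. -/

namespace MulLie

variable {G : Type*} [Group G] [MulLie G]

theorem star_one_left (z : G) : star (1 : G) z = 1 := by
  have h := star_mul_left (1 : G) 1 z
  simp only [one_mul, mul_one, inv_one] at h
  exact left_eq_mul.mp h

theorem star_one_right (x : G) : star x (1 : G) = 1 := by
  have h := star_mul_right x (1 : G) 1
  simp only [one_mul, mul_one, inv_one] at h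
  exact left_eq_mul.mp h

theorem star_inv_left (x z : G) : star x⁻¹ z = x⁻¹ * (star x z)⁻¹ * x := by
  have h := star_mul_left x⁻¹ x z
  rw [inv_mul_cancel, star_one_left] at h
  rw [eq_inv_of_mul_eq_one_right h.symm]
  group

theorem star_inv_right (x y : G) : star x y⁻¹ = y⁻¹ * (star x y)⁻¹ * y := by
  have h := star_mul_right x y⁻¹ y
  rw [inv_mul_cancel, star_one_right] at h
  rw [eq_inv_of_mul_eq_one_left h.symm]
  group

theorem star_skew (x y : G) : star y x = (star x y)⁻¹ := by
  have h := star_mul_left x y (x * y)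
  rw [star_self, star_mul_right y x y, star_mul_right x x y, star_self, star_self] at h
  simp only [mul_one, one_mul, mul_inv_cancel] at h
  rw [eq_inv_iff_mul_eq_one]
  calc star y x * star x y = x⁻¹ * (x * star y x * x⁻¹ * (x * star x y * x⁻¹)) * x := by group
    _ = 1 := by rw [← h]; group

theorem star_conj_left (x y z : G) :
    star (x * y * x⁻¹) z = star x y * star y z * (z * (star x y)⁻¹ * z⁻¹) := by
  have h := conj_star y (x⁻¹ * (z * x)) x
  rw [show x * (x⁻¹ * (z * x)) * x⁻¹ = z by group] at h
  rw [← h, star_mul_right, star_mul_right, star_inv_right, star_skew]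
  group

theorem conj_star_mul_star_eq_star_mul_conj_star (a b c d : G) :
    a * c * star b d * (a * c)⁻¹ * star a c = star a c * (c * a * star b d * (c * a)⁻¹) := by
  have h := (star_mul_left a b (c * d)).symm.trans (star_mul_right (a * b) c d)
  rw [star_mul_right, star_mul_right, star_mul_left, star_mul_left] at h
  calc a * c * star b d * (a * c)⁻¹ * star a c
      = (a * star b c * a⁻¹)⁻¹ * (a * (star b c * (c * star b d * c⁻¹)) * a⁻¹ *
          (star a c * (c * star a d * c⁻¹))) * (c * star a d * c⁻¹)⁻¹ := by group
    _ = (a * star b c * a⁻¹)⁻¹ * (a * star b c * a⁻¹ * star a c *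
          (c * (a * star b d * a⁻¹ * star a d) * c⁻¹)) * (c * star a d * c⁻¹)⁻¹ := by rw [h]
    _ = star a c * (c * a * star b d * (c * a)⁻¹) := by group

theorem star_conj_star_eq_commutator_conj_star (a c b d : G) :
    star a c * star b d * (star a c)⁻¹ = ⁅a, c⁆ * star b d * ⁅a, c⁆⁻¹ := by
  have hw : c * a * star ((c * a)⁻¹ * b * (c * a)) ((c * a)⁻¹ * d * (c * a)) * (c * a)⁻¹
      = star b d := by
    rw [conj_star]
    congr 1 <;> group
  rw [commutatorElement_def, ← hw,
    ← conj_star_mul_star_eq_star_mul_conj_star a ((c * a)⁻¹ * b * (c * a)) c]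
  group

end MulLie

/-- In a multiplicative Lie algebra, `[(x ⋆ y), z] = ([x, y] ⋆ z)` where
`[a, b] = a * b * a⁻¹ * b⁻¹`. -/
theorem commutator_star_eq_star_commutator {G : Type*} [Group G] [MulLie G]
    (x y z : G) :
    ⁅star x y, z⁆ = star ⁅x, y⁆ z := by
  calc ⁅star x y, z⁆
      = (star x y * star y z * (star x y)⁻¹)⁻¹ *
          (star x y * star y z * (z * (star x y)⁻¹ * z⁻¹)) := by
        rw [commutatorElement_def]; group
    _ = (⁅x, y⁆ * star y z * ⁅x, y⁆⁻¹)⁻¹ * star (x * y * x⁻¹) z := by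
        rw [star_conj_star_eq_commutator_conj_star, star_conj_left]
    _ = star ⁅x, y⁆ z := by
        rw [commutatorElement_def, star_mul_left (x * y * x⁻¹) y⁻¹, star_inv_left]
        group
end

section
/- If a multiplicative Lie algebra G is M𝒵-nilpotent (i.e. some term M_n(G) of the series M_0(G) = G, M_{n+1}(G) = (G⋆M_n(G))[G,M_n(G)] equals {1}), then the underlying group (G,·) is a nilpotent group. -/
open MulLie
open scoped commutatorElement

/-- The lower central series of a multiplicative Lie algebra:
`M₀(G) = G`, `M_{n+1}(G) = (G ⋆ Mₙ(G))[G, Mₙ(G)]`. -/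
def Mser (G : Type*) [Group G] [MulLie G] : ℕ → Subgroup G
  | 0 => ⊤
  | n + 1 => Subgroup.closure
      {z : G | ∃ g m : G, m ∈ Mser G n ∧ (z = star g m ∨ z = ⁅g, m⁆)}

theorem commutatorElement_mem_Mser_succ {G : Type*} [Group G] [MulLie G] {n : ℕ} (g : G)
    {m : G} (hm : m ∈ Mser G n) : ⁅g, m⁆ ∈ Mser G (n + 1) :=
  Subgroup.subset_closure ⟨g, m, hm, Or.inr rfl⟩

theorem lowerCentralSeries_le_Mser (G : Type*) [Group G] [MulLie G] (n : ℕ) :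
    (⊤ : Subgroup G).lowerCentralSeries n ≤ Mser G n := by
  induction n with
  | zero => exact le_top
  | succ n ih =>
    rw [Subgroup.lowerCentralSeries_succ, Subgroup.commutator_comm, Subgroup.commutator_le]
    exact fun g _ m hm => commutatorElement_mem_Mser_succ g (ih hm)

/-- If `G` is `M𝒵`-nilpotent, then the underlying group of `G` is nilpotent. -/
theorem isNilpotent_of_MZnilpotent
    (G : Type*) [Group G] [MulLie G] (h : ∃ n : ℕ, Mser G n = ⊥) :
    Group.IsNilpotent G := by
  obtain ⟨n, hn⟩ := h
  refine Subgroup.nilpotent_iff_lowerCentralSeries.mpr ⟨n, le_bot_iff.mp ?_⟩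
  exact hn ▸ lowerCentralSeries_le_Mser G n
end

section
/- Let G be a multiplicative Lie algebra and let H be an ideal of G contained in 𝒵(G) = LZ(G) ∩ Z(G) such that G/H is M𝒵-nilpotent. Then G is M𝒵-nilpotent. -/
open MulLie
open scoped commutatorElement

/-! Since `G/H` is `M𝒵`-nilpotent, some `Mₙ(G)` maps to the trivial group, i.e. lies in `H`.
Every element of `H` is killed by `⋆` and commutes with `G`, so all generators of
`M_{n+1}(G)` are trivial. -/

section

variable {G : Type*} [Group G] [MulLie G]

-- Expand `(x * y) ⋆ (x * y) = 1` with both distributive laws.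
lemma MulLie.star_eq_inv_star (x y : G) : star x y = (star y x)⁻¹ := by
  have h1 := star_self (x * y)
  rw [star_mul_left, star_mul_right, star_mul_right, star_self, star_self] at h1
  have h2 : x * (star y x * star x y) * x⁻¹ = 1 := by
    rw [← h1]; group
  have h3 : star y x * star x y = 1 := by
    simpa [mul_assoc] using congrArg (fun t => x⁻¹ * t * x) h2
  exact eq_inv_of_mul_eq_one_right h3

lemma Mser_le_comap {K : Type*} [Group K] [MulLie K] (f : G →* K)
    (hf : ∀ x y : G, f (star x y) = star (f x) (f y)) (k : ℕ) :
    Mser G k ≤ (Mser K k).comap f := by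
  induction k with
  | zero => simp [Mser]
  | succ k ih =>
    rw [Mser, Subgroup.closure_le]
    rintro z ⟨g, m, hm, rfl | rfl⟩ <;> refine Subgroup.subset_closure ⟨f g, f m, ih hm, ?_⟩
    · exact Or.inl (hf g m)
    · exact Or.inr (map_commutatorElement f g m)

lemma Mser_succ_eq_bot {n : ℕ}
    (h : ∀ m ∈ Mser G n, (∀ y : G, star m y = 1) ∧ m ∈ Subgroup.center G) :
    Mser G (n + 1) = ⊥ := by
  rw [Mser, Subgroup.closure_eq_bot_iff]
  rintro z ⟨g, m, hm, rfl | rfl⟩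
  · rw [Set.mem_singleton_iff, star_eq_inv_star, (h m hm).1 g, inv_one]
  · rw [Set.mem_singleton_iff, commutatorElement_def,
      Subgroup.mem_center_iff.mp (h m hm).2 g, mul_inv_cancel_right, mul_inv_cancel]

end

theorem MZnilpotent_of_quotient_by_central_ideal_general
    {G : Type*} [Group G] [MulLie G] (H : Subgroup G) [H.Normal]
    (hcentral : ∀ h ∈ H, (∀ y : G, star h y = 1) ∧ h ∈ Subgroup.center G)
    (L : MulLie (G ⧸ H))
    (hcompat : ∀ x y : G, (QuotientGroup.mk (star x y) : G ⧸ H) =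
      L.star (QuotientGroup.mk x) (QuotientGroup.mk y))
    (hnil : ∃ n : ℕ, @Mser (G ⧸ H) _ L n = ⊥) :
    ∃ n : ℕ, Mser G n = ⊥ := by
  let := L
  obtain ⟨n, hn⟩ := hnil
  have hle : Mser G n ≤ H := by
    simpa [hn] using Mser_le_comap (QuotientGroup.mk' H) hcompat n
  exact ⟨n + 1, Mser_succ_eq_bot fun m hm => hcentral m (hle hm)⟩

/-- Let `H` be an ideal of `G` contained in `𝒵(G) = LZ(G) ∩ Z(G)` such that the
quotient multiplicative Lie algebra `G/H` is `M𝒵`-nilpotent. Then `G` is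
`M𝒵`-nilpotent. -/
theorem MZnilpotent_of_quotient_by_central_ideal
    {G : Type*} [Group G] [MulLie G] (H : Subgroup G) [H.Normal]
    (hideal : ∀ g h : G, h ∈ H → star g h ∈ H)
    (hcentral : ∀ h ∈ H, (∀ y : G, star h y = 1) ∧ h ∈ Subgroup.center G)
    (L : MulLie (G ⧸ H))
    (hcompat : ∀ x y : G, (QuotientGroup.mk (star x y) : G ⧸ H) =
      L.star (QuotientGroup.mk x) (QuotientGroup.mk y))
    (hnil : ∃ n : ℕ, @Mser (G ⧸ H) _ L n = ⊥) :
    ∃ n : ℕ, Mser G n = ⊥ :=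
  MZnilpotent_of_quotient_by_central_ideal_general H hcentral L hcompat hnil
end

section
/- Let H and K be ideals of a multiplicative Lie algebra G such that G/H and G/K are M𝒵-nilpotent of classes n and m respectively. Then G/(H∩K) is M𝒵-nilpotent of class at most max(n,m). -/
open MulLie
open scoped commutatorElement

open Subgroup

theorem Subgroup.normal_closure_of_conj_mem {G : Type*} [Group G] {S : Set G}
    (hS : ∀ c, ∀ z ∈ S, c * z * c⁻¹ ∈ S) : (closure S).Normal := by
  have hconj : Group.conjugatesOfSet S = S := by
    refine Set.Subset.antisymm (fun x hx => ?_) Group.subset_conjugatesOfSet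
    obtain ⟨z, hz, hzx⟩ := Group.mem_conjugatesOfSet_iff.1 hx
    obtain ⟨c, rfl⟩ := isConj_iff.1 hzx
    exact hS c z hz
  rw [← hconj]
  exact normalClosure_normal

section Ideal

variable {G : Type*} [Group G] [MulLie G]

structure IsMulLieIdeal (N : Subgroup G) : Prop where
  normal : N.Normal
  star_mem : ∀ g, ∀ m ∈ N, star g m ∈ N

theorem isMulLieIdeal_closure {S : Set G} (hnormal : (closure S).Normal)
    (hstar : ∀ g, ∀ s ∈ S, star g s ∈ closure S) : IsMulLieIdeal (closure S) := by
  refine ⟨hnormal, fun g m hm => ?_⟩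
  induction hm using closure_induction with
  | mem s hs => exact hstar g s hs
  | one => rw [star_one_right]; exact one_mem _
  | mul a b _ _ ha hb =>
    rw [star_mul_right]
    exact mul_mem ha (hnormal.conj_mem _ hb a)
  | inv a _ ha =>
    rw [star_inv_right]
    simpa only [inv_inv] using hnormal.conj_mem _ (inv_mem ha) a⁻¹

/-- `(G ⋆ N)[G, N]` -/
def starCommutator (N : Subgroup G) : Subgroup G :=
  closure {z : G | ∃ g m : G, m ∈ N ∧ (z = star g m ∨ z = ⁅g, m⁆)}

theorem starCommutator_le {N : Subgroup G} (hN : IsMulLieIdeal N) : starCommutator N ≤ N := by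
  rw [starCommutator, closure_le]
  rintro z ⟨g, m, hm, rfl | rfl⟩
  · exact hN.star_mem g m hm
  · rw [commutatorElement_def]
    exact mul_mem (hN.normal.conj_mem m hm g) (inv_mem hm)

theorem isMulLieIdeal_starCommutator {N : Subgroup G} (hN : IsMulLieIdeal N) :
    IsMulLieIdeal (starCommutator N) := by
  have hnormal : (starCommutator N).Normal := by
    refine normal_closure_of_conj_mem ?_
    rintro c z ⟨g, m, hm, rfl | rfl⟩
    · exact ⟨c * g * c⁻¹, c * m * c⁻¹, hN.normal.conj_mem m hm c, Or.inl (conj_star g m c)⟩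
    · exact ⟨c * g * c⁻¹, c * m * c⁻¹, hN.normal.conj_mem m hm c,
        Or.inr (conjugate_commutatorElement g m c)⟩
  refine isMulLieIdeal_closure hnormal fun g z hz => subset_closure ?_
  exact ⟨g, z, starCommutator_le hN (subset_closure hz), Or.inl rfl⟩

end Ideal

section Series

variable {G : Type*} [Group G] [MulLie G]

theorem Mser_succ (k : ℕ) : Mser G (k + 1) = starCommutator (Mser G k) := rfl

theorem isMulLieIdeal_Mser : ∀ k : ℕ, IsMulLieIdeal (Mser G k)
  | 0 => ⟨normal_top, fun _ _ _ => mem_top _⟩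
  | k + 1 => isMulLieIdeal_starCommutator (isMulLieIdeal_Mser k)

theorem Mser_antitone : Antitone (Mser G) :=
  antitone_nat_of_succ_le fun k => starCommutator_le (isMulLieIdeal_Mser k)

theorem Mser_map {G' : Type*} [Group G'] [MulLie G'] {f : G →* G'}
    (hf : Function.Surjective f) (hstar : ∀ x y, f (star x y) = star (f x) (f y)) (k : ℕ) :
    Mser G' k = (Mser G k).map f := by
  induction k with
  | zero => exact (map_top_of_surjective f hf).symm
  | succ k ih =>
    rw [Mser_succ, Mser_succ, starCommutator, starCommutator, MonoidHom.map_closure, ih]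
    congr 1
    ext z
    constructor
    · rintro ⟨g', m', ⟨m, hm, rfl⟩, rfl | rfl⟩ <;> obtain ⟨g, rfl⟩ := hf g'
      · exact ⟨star g m, ⟨g, m, hm, Or.inl rfl⟩, hstar g m⟩
      · exact ⟨⁅g, m⁆, ⟨g, m, hm, Or.inr rfl⟩, map_commutatorElement f g m⟩
    · rintro ⟨w, ⟨g, m, hm, rfl | rfl⟩, rfl⟩
      · exact ⟨f g, f m, mem_map_of_mem f hm, Or.inl (hstar g m)⟩
      · exact ⟨f g, f m, mem_map_of_mem f hm, Or.inr (map_commutatorElement f g m)⟩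

theorem Mser_quotient_eq_bot_iff (N : Subgroup G) [N.Normal] [MulLie (G ⧸ N)]
    (hstar : ∀ x y : G, (QuotientGroup.mk (star x y) : G ⧸ N) =
      star (QuotientGroup.mk x) (QuotientGroup.mk y)) (k : ℕ) :
    Mser (G ⧸ N) k = ⊥ ↔ Mser G k ≤ N := by
  rw [Mser_map (QuotientGroup.mk'_surjective N) hstar, Subgroup.map_eq_bot_iff,
    QuotientGroup.ker_mk']

end Series

theorem quotient_inf_MZnilpotent_general
    {G : Type*} [Group G] [MulLie G] (H K : Subgroup G) [H.Normal] [K.Normal]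
    (LH : MulLie (G ⧸ H)) (LK : MulLie (G ⧸ K)) (LHK : MulLie (G ⧸ (H ⊓ K)))
    (hcompatH : ∀ x y : G, (QuotientGroup.mk (star x y) : G ⧸ H) =
      LH.star (QuotientGroup.mk x) (QuotientGroup.mk y))
    (hcompatK : ∀ x y : G, (QuotientGroup.mk (star x y) : G ⧸ K) =
      LK.star (QuotientGroup.mk x) (QuotientGroup.mk y))
    (hcompatHK : ∀ x y : G, (QuotientGroup.mk (star x y) : G ⧸ (H ⊓ K)) =
      LHK.star (QuotientGroup.mk x) (QuotientGroup.mk y))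
    (n m : ℕ)
    (hn : @Mser (G ⧸ H) _ LH n = ⊥)
    (hm : @Mser (G ⧸ K) _ LK m = ⊥) :
    @Mser (G ⧸ (H ⊓ K)) _ LHK (max n m) = ⊥ := by
  rw [Mser_quotient_eq_bot_iff H hcompatH] at hn
  rw [Mser_quotient_eq_bot_iff K hcompatK] at hm
  rw [Mser_quotient_eq_bot_iff (H ⊓ K) hcompatHK]
  exact le_inf ((Mser_antitone (le_max_left n m)).trans hn)
    ((Mser_antitone (le_max_right n m)).trans hm)

/-- Let `H` and `K` be ideals of `G` such that `G/H` and `G/K` are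
`M𝒵`-nilpotent of classes `n` and `m` respectively. Then `G/(H ∩ K)` is
`M𝒵`-nilpotent of class at most `max n m`. -/
theorem quotient_inf_MZnilpotent
    {G : Type*} [Group G] [MulLie G] (H K : Subgroup G) [H.Normal] [K.Normal]
    (hH : ∀ g h : G, h ∈ H → star g h ∈ H)
    (hK : ∀ g k : G, k ∈ K → star g k ∈ K)
    (LH : MulLie (G ⧸ H)) (LK : MulLie (G ⧸ K)) (LHK : MulLie (G ⧸ (H ⊓ K)))
    (hcompatH : ∀ x y : G, (QuotientGroup.mk (star x y) : G ⧸ H) =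
      LH.star (QuotientGroup.mk x) (QuotientGroup.mk y))
    (hcompatK : ∀ x y : G, (QuotientGroup.mk (star x y) : G ⧸ K) =
      LK.star (QuotientGroup.mk x) (QuotientGroup.mk y))
    (hcompatHK : ∀ x y : G, (QuotientGroup.mk (star x y) : G ⧸ (H ⊓ K)) =
      LHK.star (QuotientGroup.mk x) (QuotientGroup.mk y))
    (n m : ℕ)
    (hn : @Mser (G ⧸ H) _ LH n = ⊥) (hn' : @Mser (G ⧸ H) _ LH (n - 1) ≠ ⊥)
    (hm : @Mser (G ⧸ K) _ LK m = ⊥) (hm' : @Mser (G ⧸ K) _ LK (m - 1) ≠ ⊥) :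
    @Mser (G ⧸ (H ⊓ K)) _ LHK (max n m) = ⊥ :=
  quotient_inf_MZnilpotent_general H K LH LK LHK hcompatH hcompatK hcompatHK n m hn hm
end

section
/- Let {N_i}_{i∈I} be a family of ideals of a multiplicative Lie algebra G such that each quotient G/N_i is Lie capable. Then G/(⋂_{i∈I} N_i) is Lie capable. -/
open MulLie

/-- `𝒵(G) = LZ(G) ∩ Z(G)`: the elements that are in the Lie center and in the
group center. -/
def zSet (G : Type u) [Group G] [MulLie G] : Set G :=
  {x : G | (∀ y : G, star x y = 1) ∧ ∀ y : G, x * y = y * x}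

/-- A central extension `1 → ker f → E → G → 1` of the multiplicative Lie
algebra `G`: a surjective multiplicative Lie algebra homomorphism `f : E → G`
whose kernel is contained in `Z(E) ∩ LZ(E)`. -/
structure CentralExtOf (G : Type u) [Group G] [MulLie G] : Type (u + 1) where
  E : Type u
  [grp : Group E]
  [lie : MulLie E]
  f : E →* G
  surj : Function.Surjective f
  map_star : ∀ x y : E, f (MulLie.star x y) = star (f x) (f y)
  central : ∀ x : E, f x = 1 → x ∈ zSet E

attribute [instance] CentralExtOf.grp CentralExtOf.lie

/-- A multiplicative Lie algebra `G` is Lie capable if `G ≅ E/𝒵(E)` for some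
multiplicative Lie algebra `E`, i.e. there is a surjective multiplicative Lie
algebra homomorphism `E → G` whose kernel is exactly `𝒵(E)`. -/
def LieCapable (G : Type u) [Group G] [MulLie G] : Prop :=
  ∃ C : CentralExtOf G, ∀ x : C.E, C.f x = 1 ↔ x ∈ zSet C.E

/-!
Choose central extensions `fᵢ : Eᵢ → Qᵢ` with kernel exactly `𝒵(Eᵢ)`. Since `⋂ Nᵢ = ker p`,
the maps `qᵢ` descend to surjections `rᵢ : Q' → Qᵢ` that jointly separate points, so `Q'` is a
subdirect product of the `Qᵢ`. Let `H` be the fibre product of `∏ Eᵢ` and `Q'` over `∏ Qᵢ`; its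
projection to `Q'` is onto. Its kernel lies in `𝒵(H)` because each `ker fᵢ` is central.
Conversely `H` maps onto every `Eᵢ`, so an element of `𝒵(H)` has every coordinate in
`𝒵(Eᵢ) = ker fᵢ`; it then dies in every `Qᵢ`, hence in `Q'`.
-/

open Function MulLie

namespace MulLie

variable {G : Type*} [Group G] [MulLie G]

theorem one_star (y : G) : star 1 y = 1 := by
  have h := star_mul_left (1 : G) 1 y
  rw [one_mul, one_mul, inv_one, mul_one] at h
  exact left_eq_mul.mp h

end MulLie

theorem one_mem_zSet {G : Type*} [Group G] [MulLie G] : (1 : G) ∈ zSet G :=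
  ⟨one_star, fun y => by rw [one_mul, mul_one]⟩

instance Pi.mulLie {ι : Type*} {E : ι → Type*} [∀ i, Group (E i)] [∀ i, MulLie (E i)] :
    MulLie (∀ i, E i) where
  star x y i := star (x i) (y i)
  star_self x := funext fun i => star_self (x i)
  star_mul_right x y z := funext fun i => star_mul_right (x i) (y i) (z i)
  star_mul_left x y z := funext fun i => star_mul_left (x i) (y i) (z i)
  jacobi x y z := funext fun i => jacobi (x i) (y i) (z i)
  conj_star x y z := funext fun i => conj_star (x i) (y i) (z i)

instance Prod.mulLie {A B : Type*} [Group A] [MulLie A] [Group B] [MulLie B] :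
    MulLie (A × B) where
  star x y := (star x.1 y.1, star x.2 y.2)
  star_self x := Prod.ext (star_self x.1) (star_self x.2)
  star_mul_right x y z := Prod.ext (star_mul_right x.1 y.1 z.1) (star_mul_right x.2 y.2 z.2)
  star_mul_left x y z := Prod.ext (star_mul_left x.1 y.1 z.1) (star_mul_left x.2 y.2 z.2)
  jacobi x y z := Prod.ext (jacobi x.1 y.1 z.1) (jacobi x.2 y.2 z.2)
  conj_star x y z := Prod.ext (conj_star x.1 y.1 z.1) (conj_star x.2 y.2 z.2)

abbrev Subgroup.mulLie {G : Type*} [Group G] [MulLie G] (H : Subgroup G)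
    (hH : ∀ x ∈ H, ∀ y ∈ H, star x y ∈ H) : MulLie H where
  star x y := ⟨star x.1 y.1, hH _ x.2 _ y.2⟩
  star_self x := Subtype.ext (star_self x.1)
  star_mul_right x y z := Subtype.ext (star_mul_right x.1 y.1 z.1)
  star_mul_left x y z := Subtype.ext (star_mul_left x.1 y.1 z.1)
  jacobi x y z := Subtype.ext (jacobi x.1 y.1 z.1)
  conj_star x y z := Subtype.ext (conj_star x.1 y.1 z.1)

theorem mem_zSet_pi {ι : Type*} {E : ι → Type*} [∀ i, Group (E i)] [∀ i, MulLie (E i)]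
    {x : ∀ i, E i} (hx : ∀ i, x i ∈ zSet (E i)) : x ∈ zSet (∀ i, E i) :=
  ⟨fun y => funext fun i => (hx i).1 (y i), fun y => funext fun i => (hx i).2 (y i)⟩

theorem Prod.mk_mem_zSet {A B : Type*} [Group A] [MulLie A] [Group B] [MulLie B]
    {a : A} {b : B} (ha : a ∈ zSet A) (hb : b ∈ zSet B) : (a, b) ∈ zSet (A × B) :=
  ⟨fun y => Prod.ext (ha.1 y.1) (hb.1 y.2), fun y => Prod.ext (ha.2 y.1) (hb.2 y.2)⟩

def IsMulLieHom {A B : Type*} [Group A] [MulLie A] [Group B] [MulLie B] (f : A →* B) : Prop :=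
  ∀ x y : A, f (star x y) = star (f x) (f y)

namespace IsMulLieHom

variable {A B : Type*} [Group A] [MulLie A] [Group B] [MulLie B] {f : A →* B}

theorem map_mem_zSet (hf : IsMulLieHom f) (hsurj : Surjective f) {x : A}
    (hx : x ∈ zSet A) : f x ∈ zSet B := by
  refine ⟨fun y => ?_, fun y => ?_⟩ <;> obtain ⟨a, rfl⟩ := hsurj y
  · rw [← hf, hx.1, map_one]
  · rw [← map_mul, hx.2, map_mul]

theorem mem_zSet_of_injective (hf : IsMulLieHom f) (hinj : Injective f) {x : A}
    (hx : f x ∈ zSet B) : x ∈ zSet A := by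
  refine ⟨fun y => hinj ?_, fun y => hinj ?_⟩
  · rw [hf, hx.1, map_one]
  · rw [map_mul, hx.2, map_mul]

end IsMulLieHom

section FiberProduct

variable {ι : Type*} {E Q : ι → Type*} [∀ i, Group (E i)] [∀ i, Group (Q i)]
  {B : Type*} [Group B] (f : ∀ i, E i →* Q i) (r : ∀ i, B →* Q i)

def fiberProduct : Subgroup ((∀ i, E i) × B) where
  carrier := {x | ∀ i, f i (x.1 i) = r i x.2}
  one_mem' i := by simp
  mul_mem' ha hb i := by simp [ha i, hb i]
  inv_mem' ha i := by simp [ha i]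

variable {f r}

theorem exists_mem_fiberProduct_snd_eq (hf : ∀ i, Surjective (f i)) (b : B) :
    ∃ x ∈ fiberProduct f r, x.2 = b :=
  ⟨(fun i => surjInv (hf i) (r i b), b), fun i => surjInv_eq (hf i) _, rfl⟩

theorem exists_mem_fiberProduct_fst_apply_eq (hf : ∀ i, Surjective (f i)) {i : ι}
    (hr : Surjective (r i)) (y : E i) : ∃ x ∈ fiberProduct f r, x.1 i = y := by
  classical
  obtain ⟨b, hb⟩ := hr (f i y)
  obtain ⟨x, hx, rfl⟩ := exists_mem_fiberProduct_snd_eq (r := r) hf b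
  refine ⟨(update x.1 i y, x.2), fun j => ?_, update_self i y x.1⟩
  dsimp only
  rcases eq_or_ne j i with rfl | hj
  · rw [update_self, hb]
  · rw [update_of_ne hj, hx j]

theorem star_mem_fiberProduct [∀ i, MulLie (E i)] [∀ i, MulLie (Q i)] [MulLie B]
    (hf : ∀ i, IsMulLieHom (f i)) (hr : ∀ i, IsMulLieHom (r i)) :
    ∀ x ∈ fiberProduct f r, ∀ y ∈ fiberProduct f r, star x y ∈ fiberProduct f r :=
  fun x hx y hy i => by
    change f i (star (x.1 i) (y.1 i)) = r i (star x.2 y.2)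
    rw [hf, hr, hx i, hy i]

end FiberProduct

theorem LieCapable.of_subdirect {B : Type u} [Group B] [MulLie B] {ι : Type u}
    {Q : ι → Type u} [∀ i, Group (Q i)] [∀ i, MulLie (Q i)] (r : ∀ i, B →* Q i)
    (hr_surj : ∀ i, Surjective (r i)) (hr_star : ∀ i, IsMulLieHom (r i))
    (hr_inj : ∀ b, (∀ i, r i b = 1) → b = 1) (hcap : ∀ i, LieCapable (Q i)) :
    LieCapable B := by
  choose C hC using hcap
  let H := fiberProduct (fun i => (C i).f) r
  let _ : MulLie H := H.mulLie (star_mem_fiberProduct (fun i => (C i).map_star) hr_star)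
  let π : H →* B := (MonoidHom.snd _ _).comp H.subtype
  have π_surj : Surjective π := fun b => by
    obtain ⟨x, hx, rfl⟩ := exists_mem_fiberProduct_snd_eq (fun i => (C i).surj) b
    exact ⟨⟨x, hx⟩, rfl⟩
  have ker_π : ∀ x : H, π x = 1 ↔ x ∈ zSet H := by
    intro x
    constructor
    · intro hx
      change x.1.2 = 1 at hx
      have hfst : ∀ i, x.1.1 i ∈ zSet (C i).E :=
        fun i => (C i).central _ (by rw [x.2 i, hx, map_one])
      refine IsMulLieHom.mem_zSet_of_injective (f := H.subtype) (fun _ _ => rfl)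
        Subtype.val_injective ?_
      exact Prod.mk_mem_zSet (mem_zSet_pi hfst) (hx ▸ one_mem_zSet)
    · intro hx
      refine hr_inj _ fun i => ?_
      let proj : H →* (C i).E := (Pi.evalMonoidHom _ i).comp ((MonoidHom.fst _ _).comp H.subtype)
      have proj_surj : Surjective proj := fun y => by
        obtain ⟨x, hx, rfl⟩ :=
          exists_mem_fiberProduct_fst_apply_eq (fun i => (C i).surj) (hr_surj i) y
        exact ⟨⟨x, hx⟩, rfl⟩
      have hproj_star : IsMulLieHom proj := fun _ _ => rfl
      change r i x.1.2 = 1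
      rw [← x.2 i]
      exact (hC i _).2 (hproj_star.map_mem_zSet proj_surj hx)
  exact ⟨⟨H, π, π_surj, fun _ _ => rfl, fun x hx => (ker_π x).1 hx⟩, ker_π⟩

/-- If `{Nᵢ}` is a family of ideals of `G` (realized as kernels of surjective
multiplicative Lie algebra homomorphisms `qᵢ : G → Qᵢ` onto the quotients
`Qᵢ = G/Nᵢ`) such that each `G/Nᵢ` is Lie capable, then `G/(⋂ᵢ Nᵢ)` is Lie
capable. -/
theorem lieCapable_quotient_iInf {G : Type u} [Group G] [MulLie G]
    {ι : Type u} (N : ι → Subgroup G)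
    (Q : ι → Type u) [∀ i, Group (Q i)] [∀ i, MulLie (Q i)]
    (q : ∀ i, G →* Q i) (hqsurj : ∀ i, Function.Surjective (q i))
    (hqstar : ∀ i, ∀ x y : G, q i (star x y) = star (q i x) (q i y))
    (hqker : ∀ i, (q i).ker = N i)
    (hcap : ∀ i, LieCapable (Q i))
    (Q' : Type u) [Group Q'] [MulLie Q'] (p : G →* Q')
    (hpsurj : Function.Surjective p)
    (hpstar : ∀ x y : G, p (star x y) = star (p x) (p y))
    (hpker : p.ker = ⨅ i, N i) :
    LieCapable Q' := by
  have hker_le : ∀ i, p.ker ≤ (q i).ker := fun i => hpker ▸ hqker i ▸ iInf_le N i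
  let r i : Q' →* Q i := p.liftOfSurjective hpsurj ⟨q i, hker_le i⟩
  have hr : ∀ i g, r i (p g) = q i g := fun i => p.liftOfRightInverse_comp_apply _ _ _
  refine LieCapable.of_subdirect r (fun i => ?_) (fun i => ?_) (fun b hb => ?_) hcap
  · intro y
    obtain ⟨g, rfl⟩ := hqsurj i y
    exact ⟨p g, hr i g⟩
  · intro x y
    obtain ⟨a, rfl⟩ := hpsurj x
    obtain ⟨b, rfl⟩ := hpsurj y
    rw [← hpstar, hr, hr, hr, hqstar]
  · obtain ⟨g, rfl⟩ := hpsurj b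
    change g ∈ p.ker
    rw [hpker, Subgroup.mem_iInf]
    intro i
    rw [← hqker i, MonoidHom.mem_ker, ← hr]
    exact hb i
end
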